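/- Fix γ > 1 and ρ₀ > 0. For ρ₁ > ρ₀ define u₁(ρ₁) = (ρ₁ − ρ₀)√(2(ρ₁^{γ−1} − ρ₀^{γ−1})/(ρ₁² − ρ₀²)) and c₁(ρ₁) = ρ₁^{(γ−1)/2}. Then there exists ρ^c > ρ₀ such that u₁(ρ₁) ≤ c₁(ρ₁) for all ρ₁ ∈ (ρ₀, ρ^c], and u₁(ρ₁) > c₁(ρ₁) for all ρ₁ ∈ (ρ^c, ∞). -/

import Mathlib

/-!
Squaring, `u₁ ≤ c₁` becomes `(ρ₁ - 3ρ₀) ρ₁^(γ-1) ≤ 2 (ρ₁ - ρ₀) ρ₀^(γ-1)`, that is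
`H(ρ₁) ≤ 2 ρ₀^(γ-1)` with `H(ρ) = (ρ - 3ρ₀)/(ρ - ρ₀) · ρ^(γ-1)`. Now `H ≤ 0` on `(ρ₀, 3ρ₀]`,
while on `[3ρ₀, ∞)` it is continuous and increases strictly from `0` to `∞`, so `ρ^c` is the
point where `H(ρ^c) = 2 ρ₀^(γ-1)`.
-/

open Filter Set Topology

noncomputable def shockSpeed (γ ρ₀ ρ₁ : ℝ) : ℝ :=
  (ρ₁ - ρ₀) * √(2 * (ρ₁ ^ (γ - 1) - ρ₀ ^ (γ - 1)) / (ρ₁ ^ 2 - ρ₀ ^ 2))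

noncomputable def sonicSpeed (γ ρ : ℝ) : ℝ := ρ ^ ((γ - 1) / 2)

noncomputable def sonicCriterion (γ ρ₀ ρ : ℝ) : ℝ := (ρ - 3 * ρ₀) / (ρ - ρ₀) * ρ ^ (γ - 1)

lemma mul_sqrt_le_sqrt_iff {d x y : ℝ} (hd : 0 ≤ d) (hy : 0 ≤ y) :
    d * √x ≤ √y ↔ d ^ 2 * x ≤ y := by
  rw [← Real.sqrt_le_sqrt_iff hy, Real.sqrt_mul (sq_nonneg d), Real.sqrt_sq hd]

lemma sq_mul_div_sq_sub_sq_le_iff {ρ₀ ρ₁ B C : ℝ} (hρ₀ : 0 < ρ₀) (h : ρ₀ < ρ₁) :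
    (ρ₁ - ρ₀) ^ 2 * (2 * (B - C) / (ρ₁ ^ 2 - ρ₀ ^ 2)) ≤ B ↔
      (ρ₁ - 3 * ρ₀) / (ρ₁ - ρ₀) * B ≤ 2 * C := by
  have hd : 0 < ρ₁ - ρ₀ := sub_pos.2 h
  have hs : 0 < ρ₁ + ρ₀ := by linarith
  have hsimp : (ρ₁ - ρ₀) ^ 2 * (2 * (B - C) / (ρ₁ ^ 2 - ρ₀ ^ 2))
      = 2 * (ρ₁ - ρ₀) * (B - C) / (ρ₁ + ρ₀) := by
    rw [show ρ₁ ^ 2 - ρ₀ ^ 2 = (ρ₁ - ρ₀) * (ρ₁ + ρ₀) by ring]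
    field_simp
  rw [hsimp, div_le_iff₀ hs, div_mul_eq_mul_div, div_le_iff₀ hd]
  constructor <;> intro <;> linarith

lemma shockSpeed_le_sonicSpeed_iff {γ ρ₀ ρ₁ : ℝ} (hρ₀ : 0 < ρ₀) (h : ρ₀ < ρ₁) :
    shockSpeed γ ρ₀ ρ₁ ≤ sonicSpeed γ ρ₁ ↔ sonicCriterion γ ρ₀ ρ₁ ≤ 2 * ρ₀ ^ (γ - 1) := by
  have hρ₁ : 0 ≤ ρ₁ := by linarith
  have hc : sonicSpeed γ ρ₁ = √(ρ₁ ^ (γ - 1)) := by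
    rw [sonicSpeed, Real.sqrt_eq_rpow, ← Real.rpow_mul hρ₁]
    ring_nf
  rw [hc, shockSpeed, mul_sqrt_le_sqrt_iff (by linarith) (by positivity),
    sq_mul_div_sq_sub_sq_le_iff hρ₀ h, sonicCriterion]

lemma sonicCriterion_nonpos {γ ρ₀ ρ : ℝ} (h₀ : ρ₀ < ρ) (h₃ : ρ ≤ 3 * ρ₀) :
    sonicCriterion γ ρ₀ ρ ≤ 0 :=
  mul_nonpos_of_nonpos_of_nonneg (div_nonpos_of_nonpos_of_nonneg (by linarith) (by linarith))
    (Real.rpow_nonneg (by linarith) _)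

lemma strictMonoOn_sonicCriterion {γ ρ₀ : ℝ} (hγ : 1 ≤ γ) (hρ₀ : 0 < ρ₀) :
    StrictMonoOn (sonicCriterion γ ρ₀) (Ici (3 * ρ₀)) := by
  intro a (ha : 3 * ρ₀ ≤ a) b (hb : 3 * ρ₀ ≤ b) hab
  have hratio : (a - 3 * ρ₀) / (a - ρ₀) < (b - 3 * ρ₀) / (b - ρ₀) := by
    rw [div_lt_div_iff₀ (by linarith) (by linarith)]
    nlinarith
  calc sonicCriterion γ ρ₀ a ≤ (a - 3 * ρ₀) / (a - ρ₀) * b ^ (γ - 1) := by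
        unfold sonicCriterion
        gcongr
        · exact div_nonneg (by linarith) (by linarith)
        · linarith
    _ < sonicCriterion γ ρ₀ b :=
        mul_lt_mul_of_pos_right hratio (Real.rpow_pos_of_pos (by linarith) _)

lemma continuousOn_sonicCriterion {γ ρ₀ : ℝ} (hρ₀ : 0 < ρ₀) :
    ContinuousOn (sonicCriterion γ ρ₀) (Ici (3 * ρ₀)) := by
  intro ρ (hρ : 3 * ρ₀ ≤ ρ)
  have : ρ - ρ₀ ≠ 0 := by linarith
  have : ρ ≠ 0 ∨ 0 ≤ γ - 1 := Or.inl (by linarith)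
  unfold sonicCriterion
  exact ContinuousAt.continuousWithinAt (by fun_prop (disch := assumption))

lemma tendsto_sonicCriterion_atTop {γ ρ₀ : ℝ} (hγ : 1 < γ) :
    Tendsto (sonicCriterion γ ρ₀) atTop atTop := by
  have hratio : Tendsto (fun ρ => (ρ - 3 * ρ₀) / (ρ - ρ₀)) atTop (𝓝 1) := by
    have h : Tendsto (fun ρ => 1 - 2 * ρ₀ / (ρ - ρ₀)) atTop (𝓝 (1 - 0)) :=
      tendsto_const_nhds.sub <|
        tendsto_const_nhds.div_atTop (tendsto_atTop_add_const_right _ _ tendsto_id)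
    rw [sub_zero] at h
    refine h.congr' ?_
    filter_upwards [eventually_gt_atTop ρ₀] with ρ hρ
    field_simp
    ring
  exact hratio.pos_mul_atTop one_pos (tendsto_rpow_atTop (by linarith))

/-- Fix `γ > 1` and `ρ₀ > 0`, and for `ρ₁ > ρ₀` let
`u₁(ρ₁) = (ρ₁ − ρ₀)√(2(ρ₁^{γ−1} − ρ₀^{γ−1})/(ρ₁² − ρ₀²))` (the upstream speed
of state (1) in the von Neumann shock reflection-diffraction problem) and
`c₁(ρ₁) = ρ₁^{(γ−1)/2}` (its sonic speed).  Then there is a critical density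
`ρ^c > ρ₀` with `u₁ ≤ c₁` for `ρ₁ ∈ (ρ₀, ρ^c]` and `u₁ > c₁` for
`ρ₁ ∈ (ρ^c, ∞)`. -/
theorem stmt_19 (γ ρ₀ : ℝ) (hγ : 1 < γ) (hρ₀ : 0 < ρ₀) :
    ∃ ρc : ℝ, ρ₀ < ρc ∧
      (∀ ρ₁ : ℝ, ρ₀ < ρ₁ → ρ₁ ≤ ρc →
        (ρ₁ - ρ₀) * Real.sqrt (2 * (ρ₁ ^ (γ - 1) - ρ₀ ^ (γ - 1)) / (ρ₁ ^ 2 - ρ₀ ^ 2))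
          ≤ ρ₁ ^ ((γ - 1) / 2)) ∧
      (∀ ρ₁ : ℝ, ρc < ρ₁ →
        ρ₁ ^ ((γ - 1) / 2) <
          (ρ₁ - ρ₀) * Real.sqrt (2 * (ρ₁ ^ (γ - 1) - ρ₀ ^ (γ - 1)) / (ρ₁ ^ 2 - ρ₀ ^ 2))) := by
  have hpos : 0 < 2 * ρ₀ ^ (γ - 1) := by positivity
  have hstart : 2 * ρ₀ ^ (γ - 1) ∈ Ici (sonicCriterion γ ρ₀ (3 * ρ₀)) := by
    simpa [sonicCriterion] using hpos.le
  obtain ⟨ρc, hρc : 3 * ρ₀ ≤ ρc, hcrit⟩ := intermediate_value_Ici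
    (continuousOn_sonicCriterion hρ₀) (tendsto_sonicCriterion_atTop hγ) hstart
  have hmono := strictMonoOn_sonicCriterion hγ.le hρ₀
  refine ⟨ρc, by linarith, fun ρ₁ h₀ hle => ?_, fun ρ₁ hlt => ?_⟩
  · refine (shockSpeed_le_sonicSpeed_iff hρ₀ h₀).2 ?_
    rcases le_or_gt ρ₁ (3 * ρ₀) with h₃ | h₃
    · exact (sonicCriterion_nonpos h₀ h₃).trans hpos.le
    · exact hcrit ▸ (hmono.le_iff_le h₃.le hρc).2 hle
  · refine lt_of_not_ge fun hle => ?_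
    have h₃ : 3 * ρ₀ ≤ ρ₁ := hρc.trans hlt.le
    have hsub := (shockSpeed_le_sonicSpeed_iff hρ₀ (by linarith)).1 hle
    exact (hcrit ▸ hmono hρc h₃ hlt).not_ge hsub
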